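/- Let λ ∈ (0,1]. The infimum of (1/2)·(α + β + √((α−β)² + 4x²)) over all real α, β, x satisfying: α + 2x²/λ ≥ β + λ/2, α ≥ 1/2, β ≥ (1−λ)/2, x ≥ 0, and (α − 1/2)·(β − (1−λ)/2) ≥ (min{ min{√(αβ), x} − (1/2)√(1−λ), 0 })², equals 1 − λ/2, and it is attained (for instance at α = 1/2, β = (1−λ)/2, x = (1/2)√(1−λ)). -/
import Mathlib


open scoped Kronecker ComplexOrder
open Matrix

noncomputable section

/-- The feasible values of the optimisation in Statement 10. -/
def stmt10Set (l : ℝ) : Set ℝ :=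
  {v : ℝ | ∃ α β x : ℝ,
    β + l / 2 ≤ α + 2 * x ^ 2 / l ∧ 1 / 2 ≤ α ∧ (1 - l) / 2 ≤ β ∧ 0 ≤ x ∧
    (min (min (Real.sqrt (α * β)) x - Real.sqrt (1 - l) / 2) 0) ^ 2
      ≤ (α - 1 / 2) * (β - (1 - l) / 2) ∧
    v = (α + β + Real.sqrt ((α - β) ^ 2 + 4 * x ^ 2)) / 2}

set_option maxHeartbeats 1000000 in
lemma stmt10_lb (l : ℝ) (hl0 : 0 < l) (hl1 : l ≤ 1) :
    ∀ v ∈ stmt10Set l, 1 - l / 2 ≤ v := by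
  rintro v ⟨α, β, x, h1, hα, hβ, hx, h2, rfl⟩
  clear h1
  have hs : Real.sqrt (1 - l) ^ 2 = 1 - l := Real.sq_sqrt (by linarith)
  set s := Real.sqrt (1 - l) with hs'
  have hs0 : 0 ≤ s := Real.sqrt_nonneg _
  have hy : Real.sqrt ((α - β) ^ 2 + 4 * x ^ 2) ^ 2 = (α - β) ^ 2 + 4 * x ^ 2 :=
    Real.sq_sqrt (by positivity)
  have hy0 : 0 ≤ Real.sqrt ((α - β) ^ 2 + 4 * x ^ 2) := Real.sqrt_nonneg _
  rcases le_or_gt (2 - l) (α + β) with hc | hc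
  · nlinarith
  have key : (2 - l - 2 * α) * (2 - l - 2 * β) ≤ 4 * x ^ 2 := by
    rcases le_or_gt (2 - l - 2 * α) 0 with h | hA
    · nlinarith [mul_nonpos_of_nonpos_of_nonneg h (show (0:ℝ) ≤ 2 - l - 2*β by linarith), sq_nonneg x]
    rcases le_or_gt (2 - l - 2 * β) 0 with h | hB
    · nlinarith [mul_nonpos_of_nonneg_of_nonpos hA.le h, sq_nonneg x]
    rcases le_or_gt (s / 2) x with hxs | hxs
    · have h4 : 1 - l ≤ 4 * x ^ 2 := by nlinarith [hxs, hs0, hs]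
      have h5 : 0 ≤ (2 - l - 2*α) * (1 - (2 - l - 2*β)) :=
        mul_nonneg hA.le (by linarith)
      nlinarith [h4, h5, hA, hB]
    have hmin1 : min (min (Real.sqrt (α * β)) x - s / 2) 0
        = min (Real.sqrt (α * β)) x - s / 2 := by
      apply min_eq_left
      have : min (Real.sqrt (α * β)) x ≤ x := min_le_right _ _
      linarith
    rw [hmin1] at h2
    rcases le_or_gt (Real.sqrt (α * β)) x with hab | hab
    · have hab2 : Real.sqrt (α * β) ^ 2 = α * β :=
        Real.sq_sqrt (mul_nonneg (by linarith) (by linarith))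
      have h4 : α * β ≤ x ^ 2 := by
        rw [← hab2]; exact pow_le_pow_left₀ (Real.sqrt_nonneg _) hab 2
      have h5 : 0 ≤ (2 - l) * (2*α + 2*β - 2 + l) :=
        mul_nonneg (by linarith) (by linarith)
      have h6 : (2 - l - 2 * α) * (2 - l - 2 * β)
          = 4 * (α * β) - (2 - l) * (2*α + 2*β - 2 + l) := by ring
      rw [h6]; linarith [h4, h5]
    · rw [min_eq_right hab.le] at h2
      set p := Real.sqrt (α - 1 / 2) with hp'
      set q := Real.sqrt (β - (1 - l) / 2) with hq'
      have hp2 : p ^ 2 = α - 1 / 2 := Real.sq_sqrt (by linarith)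
      have hq2 : q ^ 2 = β - (1 - l) / 2 := Real.sq_sqrt (by linarith)
      have hp0 : 0 ≤ p := Real.sqrt_nonneg _
      have hq0 : 0 ≤ q := Real.sqrt_nonneg _
      have hpq0 : 0 ≤ p * q := mul_nonneg hp0 hq0
      have hpq : (s / 2 - x) ^ 2 ≤ (p * q) ^ 2 := by
        rw [mul_pow, hp2, hq2]; nlinarith [h2]
      have hr : s / 2 - x ≤ p * q := by nlinarith [hpq, hpq0, hxs]
      have hpqlt : p * q < s / 2 := by
        have hp2' : p ^ 2 < s ^ 2 / 2 := by rw [hp2, hs]; linarith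
        have hq2' : q ^ 2 < 1 / 2 := by rw [hq2]; linarith
        have h1 : (p * q) ^ 2 < (s / 2) ^ 2 := by
          have e1 : p ^ 2 * q ^ 2 ≤ s ^ 2 / 2 * q ^ 2 :=
            mul_le_mul_of_nonneg_right hp2'.le (sq_nonneg q)
          have e2 : s ^ 2 / 2 * q ^ 2 < s ^ 2 / 2 * (1 / 2) ∨ s ^ 2 = 0 := by
            rcases eq_or_lt_of_le (sq_nonneg s) with h | h
            · exact Or.inr h.symm
            · exact Or.inl (by nlinarith [hq2', h])
          rcases e2 with h | h
          · calc (p * q) ^ 2 = p ^ 2 * q ^ 2 := by ring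
              _ ≤ s ^ 2 / 2 * q ^ 2 := e1
              _ < s ^ 2 / 2 * (1 / 2) := h
              _ = (s / 2) ^ 2 * (1/2) + (s/2)^2*(1/2) := by ring
              _ ≤ (s / 2) ^ 2 := by linarith [sq_nonneg (s/2)]
          · exfalso; nlinarith [hp2', sq_nonneg p]
        exact lt_of_pow_lt_pow_left₀ 2 (by positivity) h1
      have hx2 : 4 * (s / 2 - p * q) ^ 2 ≤ 4 * x ^ 2 := by
        nlinarith [hr, hpqlt, hx]
      have hgoal : (2 - l - 2 * α) * (2 - l - 2 * β)
          = (s ^ 2 - 2 * p ^ 2) * (1 - 2 * q ^ 2) := by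
        rw [hp2, hq2, hs]; ring
      rw [hgoal]
      nlinarith [hx2, sq_nonneg (p - s * q)]
  have hcc : (2 - l - α - β) ^ 2 ≤ Real.sqrt ((α - β) ^ 2 + 4 * x ^ 2) ^ 2 := by
    rw [hy]; nlinarith [key]
  have : 2 - l - α - β ≤ Real.sqrt ((α - β) ^ 2 + 4 * x ^ 2) := by
    nlinarith [hcc, hy0, hc]
  linarith

lemma stmt10_val (l : ℝ) (hl0 : 0 < l) (hl1 : l ≤ 1) :
    (1 / 2 + (1 - l) / 2 +
        Real.sqrt ((1 / 2 - (1 - l) / 2) ^ 2 + 4 * (Real.sqrt (1 - l) / 2) ^ 2)) / 2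
      = 1 - l / 2 := by
  have hs : Real.sqrt (1 - l) ^ 2 = 1 - l := Real.sq_sqrt (by linarith)
  have h1 : (1 / 2 - (1 - l) / 2) ^ 2 + 4 * (Real.sqrt (1 - l) / 2) ^ 2 = (1 - l / 2) ^ 2 := by
    nlinarith [hs]
  rw [h1, Real.sqrt_sq (by linarith)]
  ring

/-- The infimum equals `1 − λ/2` and is attained, for instance at
`α = 1/2`, `β = (1−λ)/2`, `x = √(1−λ)/2`. -/
theorem stmt10 (l : ℝ) (hl : l ∈ Set.Ioc (0:ℝ) 1) :
    sInf (stmt10Set l) = 1 - l / 2 ∧ IsLeast (stmt10Set l) (1 - l / 2) ∧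
    (1 / 2 + (1 - l) / 2 +
        Real.sqrt ((1 / 2 - (1 - l) / 2) ^ 2 + 4 * (Real.sqrt (1 - l) / 2) ^ 2)) / 2
      = 1 - l / 2 := by
  obtain ⟨hl0, hl1⟩ := hl
  have hval := stmt10_val l hl0 hl1
  have hs : Real.sqrt (1 - l) ^ 2 = 1 - l := Real.sq_sqrt (by linarith)
  have hs0 : 0 ≤ Real.sqrt (1 - l) := Real.sqrt_nonneg _
  have hmem : (1 - l / 2) ∈ stmt10Set l := by
    refine ⟨1 / 2, (1 - l) / 2, Real.sqrt (1 - l) / 2, ?_, le_refl _, le_refl _,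
      by positivity, ?_, ?_⟩
    · have hnn : 0 ≤ 2 * (Real.sqrt (1 - l) / 2) ^ 2 / l := by positivity
      linarith
    · have hab : Real.sqrt (1 / 2 * ((1 - l) / 2)) = Real.sqrt (1 - l) / 2 := by
        rw [show (1 : ℝ) / 2 * ((1 - l) / 2) = (Real.sqrt (1 - l) / 2) ^ 2 by nlinarith [hs]]
        exact Real.sqrt_sq (by positivity)
      rw [hab]
      simp
    · exact hval.symm
  have hleast : IsLeast (stmt10Set l) (1 - l / 2) := ⟨hmem, stmt10_lb l hl0 hl1⟩
  exact ⟨hleast.csInf_eq, hleast, hval⟩
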